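/- Let D ≥ 1, let K and L be constant skew-symmetric real D×D matrices, let S : ℝ^D → ℝ be continuously differentiable, and let z : ℝ × ℝ → ℝ^D be twice continuously differentiable, 1-periodic in its second argument (z(t, x+1) = z(t, x) for all t, x), and satisfy K ∂_t z + L ∂_x z = ∇S(z) at every point. Then the total momentum t ↦ ∫₀¹ ½ (∂_x z)(t,x)·(K z)(t,x) dx and the total energy t ↦ ∫₀¹ [½ z(t,x)·(L ∂_x z)(t,x) − S(z(t,x))] dx are constant functions of t. -/

import Mathlib

/-!
The momentum density `M = ½ zₓ·Kz` and the energy density `E = ½ z·Lzₓ − S(z)` obey local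
conservation laws `∂ₜM + ∂ₓF = 0` and `∂ₜE + ∂ₓG = 0` with fluxes `F = ½ z·Kzₜ − S(z)` and
`G = ½ zₜ·Lz`. Both follow from the PDE by equality of mixed partials together with
`v·Kv = v·Lv = 0`, which reduces `∇S(z)·zₓ` to `zₓ·Kzₜ` and `∇S(z)·zₜ` to `zₜ·Lzₓ`.
Integrating a conservation law over `x ∈ [0, 1]` and `t ∈ [t₁, t₂]`, Fubini and periodicity
of the flux give equal totals at `t₁` and `t₂`.
-/

open Matrix intervalIntegral

/-- Gradient of `S : ℝ^D → ℝ`, componentwise via the Fréchet derivative. -/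
noncomputable def grad {D : ℕ} (S : (Fin D → ℝ) → ℝ) (p : Fin D → ℝ) : Fin D → ℝ :=
  fun i => fderiv ℝ S p (Pi.single i 1)

/-- Partial derivative in the first (time) variable. -/
noncomputable def pt {E : Type*} [NormedAddCommGroup E] [NormedSpace ℝ E]
    (z : ℝ × ℝ → E) (p : ℝ × ℝ) : E :=
  deriv (fun s => z (s, p.2)) p.1

/-- Partial derivative in the second (space) variable. -/
noncomputable def px {E : Type*} [NormedAddCommGroup E] [NormedSpace ℝ E]
    (z : ℝ × ℝ → E) (p : ℝ × ℝ) : E :=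
  deriv (fun y => z (p.1, y)) p.2

open MeasureTheory

section PartialDerivatives

variable {E : Type*} [NormedAddCommGroup E] [NormedSpace ℝ E] {z : ℝ × ℝ → E}

theorem hasDerivAt_pt {p : ℝ × ℝ} (hz : DifferentiableAt ℝ z p) :
    HasDerivAt (fun s => z (s, p.2)) (pt z p) p.1 :=
  (hz.comp p.1 ((hasDerivAt_id p.1).prodMk (hasDerivAt_const p.1 p.2)).differentiableAt
    |>.hasDerivAt)

theorem hasDerivAt_px {p : ℝ × ℝ} (hz : DifferentiableAt ℝ z p) :
    HasDerivAt (fun y => z (p.1, y)) (px z p) p.2 :=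
  (hz.comp p.2 ((hasDerivAt_const p.2 p.1).prodMk (hasDerivAt_id p.2)).differentiableAt
    |>.hasDerivAt)

theorem pt_eq_fderiv (hz : Differentiable ℝ z) : pt z = fun p => fderiv ℝ z p (1, 0) := by
  funext p
  have hline : HasDerivAt (fun s : ℝ => (s, p.2)) ((1 : ℝ), (0 : ℝ)) p.1 :=
    (hasDerivAt_id p.1).prodMk (hasDerivAt_const p.1 p.2)
  exact ((hz p).hasFDerivAt.comp_hasDerivAt p.1 hline).deriv

theorem px_eq_fderiv (hz : Differentiable ℝ z) : px z = fun p => fderiv ℝ z p (0, 1) := by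
  funext p
  have hline : HasDerivAt (fun y : ℝ => (p.1, y)) ((0 : ℝ), (1 : ℝ)) p.2 :=
    (hasDerivAt_const p.2 p.1).prodMk (hasDerivAt_id p.2)
  exact ((hz p).hasFDerivAt.comp_hasDerivAt p.2 hline).deriv

theorem ContDiff.pt {n : WithTop ℕ∞} (hz : ContDiff ℝ (n + 1) z) : ContDiff ℝ n (pt z) := by
  rw [pt_eq_fderiv (hz.differentiable (by simp))]
  exact (hz.fderiv_right le_rfl).clm_apply contDiff_const

theorem ContDiff.px {n : WithTop ℕ∞} (hz : ContDiff ℝ (n + 1) z) : ContDiff ℝ n (px z) := by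
  rw [px_eq_fderiv (hz.differentiable (by simp))]
  exact (hz.fderiv_right le_rfl).clm_apply contDiff_const

theorem pt_px_comm (hz : ContDiff ℝ 2 z) : pt (px z) = px (pt z) := by
  have hz' : ContDiff ℝ (1 + 1) z := hz
  have hdz : Differentiable ℝ (fderiv ℝ z) := (hz'.fderiv_right le_rfl).differentiable one_ne_zero
  rw [pt_eq_fderiv (hz'.px.differentiable one_ne_zero),
    px_eq_fderiv (hz'.pt.differentiable one_ne_zero), pt_eq_fderiv (hz'.differentiable two_ne_zero),
    px_eq_fderiv (hz'.differentiable two_ne_zero)]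
  funext p
  simp [fderiv_clm_apply (hdz p) (differentiableAt_const _),
    (hz.contDiffAt.isSymmSndFDerivAt (by simp)).eq]

theorem pt_eq_of_forall_eq {a b : ℝ} (h : ∀ t, z (t, a) = z (t, b)) (t : ℝ) :
    pt z (t, a) = pt z (t, b) := by
  simp only [pt, h]

end PartialDerivatives

theorem integral_eq_of_pt_add_px_eq_zero {f g : ℝ × ℝ → ℝ} (hf : ContDiff ℝ 1 f)
    (hg : ContDiff ℝ 1 g) (hfg : ∀ p, pt f p + px g p = 0) {a b : ℝ}
    (hab : ∀ t, g (t, a) = g (t, b)) (t₁ t₂ : ℝ) :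
    ∫ x in a..b, f (t₁, x) = ∫ x in a..b, f (t₂, x) := by
  have hft : Continuous (pt f) := (ContDiff.pt (n := 0) (by simpa using hf)).continuous
  have hgx : Continuous (px g) := (ContDiff.px (n := 0) (by simpa using hg)).continuous
  have hslice : ∀ t, IntervalIntegrable (fun x => f (t, x)) volume a b := fun t =>
    (hf.continuous.comp (continuous_const.prodMk continuous_id)).intervalIntegrable _ _
  have htime : ∀ x, f (t₂, x) - f (t₁, x) = ∫ t in t₁..t₂, pt f (t, x) := fun x =>
    (integral_eq_sub_of_hasDerivAt (f := fun t => f (t, x))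
      (fun t _ => hasDerivAt_pt (hf.differentiable one_ne_zero (t, x)))
      ((hft.comp (continuous_id.prodMk continuous_const)).intervalIntegrable _ _)).symm
  have hspace : ∀ t, ∫ x in a..b, pt f (t, x) = 0 := fun t => by
    simp_rw [eq_neg_of_add_eq_zero_left (hfg _), intervalIntegral.integral_neg, neg_eq_zero]
    rw [integral_eq_sub_of_hasDerivAt (f := fun x => g (t, x))
      (fun x _ => hasDerivAt_px (hg.differentiable one_ne_zero (t, x)))
      ((hgx.comp (continuous_const.prodMk continuous_id)).intervalIntegrable _ _), hab, sub_self]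
  refine (sub_eq_zero.mp ?_).symm
  calc (∫ x in a..b, f (t₂, x)) - ∫ x in a..b, f (t₁, x)
      = ∫ x in a..b, ∫ t in t₁..t₂, pt f (t, x) := by
        rw [← integral_sub (hslice t₂) (hslice t₁)]
        simp only [htime]
    _ = ∫ t in t₁..t₂, ∫ x in a..b, pt f (t, x) :=
        intervalIntegral_intervalIntegral_swap <|
          ((hft.comp continuous_swap).continuousOn.integrableOn_compact
            (isCompact_uIcc.prod isCompact_uIcc)).mono_set
            (Set.prod_mono Set.uIoc_subset_uIcc Set.uIoc_subset_uIcc)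
    _ = 0 := by simp only [hspace, intervalIntegral.integral_zero]

section MatrixBilinearForm

variable {D : ℕ} {K : Matrix (Fin D) (Fin D) ℝ}

theorem dotProduct_mulVec_eq_neg_of_transpose_eq_neg (hK : Kᵀ = -K) (u v : Fin D → ℝ) :
    u ⬝ᵥ K *ᵥ v = -(v ⬝ᵥ K *ᵥ u) := by
  rw [dotProduct_mulVec, ← mulVec_transpose, hK, neg_mulVec, neg_dotProduct, dotProduct_comm]

theorem dotProduct_mulVec_self_of_transpose_eq_neg (hK : Kᵀ = -K) (u : Fin D → ℝ) :
    u ⬝ᵥ K *ᵥ u = 0 := by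
  linarith [dotProduct_mulVec_eq_neg_of_transpose_eq_neg hK u u]

theorem HasDerivAt.dotProduct_mulVec {u v : ℝ → Fin D → ℝ} {u' v' : Fin D → ℝ} {s : ℝ}
    (hu : HasDerivAt u u' s) (hv : HasDerivAt v v' s) :
    HasDerivAt (fun r => u r ⬝ᵥ K *ᵥ v r) (u' ⬝ᵥ K *ᵥ v s + u s ⬝ᵥ K *ᵥ v') s := by
  have hKv : HasDerivAt (fun r => K *ᵥ v r) (K *ᵥ v') s :=
    (mulVecLin K).toContinuousLinearMap.hasFDerivAt.comp_hasDerivAt s hv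
  have := HasDerivAt.fun_sum fun i (_ : i ∈ Finset.univ) =>
    (hasDerivAt_pi.mp hu i).fun_mul (hasDerivAt_pi.mp hKv i)
  simpa only [dotProduct, Finset.sum_add_distrib] using this

theorem ContDiff.dotProduct_mulVec {E : Type*} [NormedAddCommGroup E] [NormedSpace ℝ E]
    {n : WithTop ℕ∞} {u v : E → Fin D → ℝ}
    (hu : ContDiff ℝ n u) (hv : ContDiff ℝ n v) :
    ContDiff ℝ n (fun p => u p ⬝ᵥ K *ᵥ v p) := by
  simp only [dotProduct, mulVec]
  fun_prop

end MatrixBilinearForm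

section Multisymplectic

variable {D : ℕ} {K L : Matrix (Fin D) (Fin D) ℝ} {S : (Fin D → ℝ) → ℝ} {z : ℝ × ℝ → Fin D → ℝ}

theorem fderiv_apply_eq_grad_dotProduct (q w : Fin D → ℝ) :
    fderiv ℝ S q w = grad S q ⬝ᵥ w := by
  calc fderiv ℝ S q w = ∑ i, fderiv ℝ S q (w i • Pi.single i 1) := by
        simp_rw [← Pi.single_smul', smul_eq_mul, mul_one, ← map_sum, Finset.univ_sum_single]
    _ = grad S q ⬝ᵥ w := by simp [grad, dotProduct, mul_comm]

theorem fderiv_apply_right_of_add_eq_grad (hL : Lᵀ = -L) {q a b : Fin D → ℝ}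
    (h : K *ᵥ a + L *ᵥ b = grad S q) : fderiv ℝ S q b = b ⬝ᵥ K *ᵥ a := by
  rw [fderiv_apply_eq_grad_dotProduct, ← h, add_dotProduct, dotProduct_comm (K *ᵥ a),
    dotProduct_comm (L *ᵥ b), dotProduct_mulVec_self_of_transpose_eq_neg hL, add_zero]

theorem fderiv_apply_left_of_add_eq_grad (hK : Kᵀ = -K) {q a b : Fin D → ℝ}
    (h : K *ᵥ a + L *ᵥ b = grad S q) : fderiv ℝ S q a = a ⬝ᵥ L *ᵥ b := by
  rw [fderiv_apply_eq_grad_dotProduct, ← h, add_dotProduct, dotProduct_comm (K *ᵥ a),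
    dotProduct_comm (L *ᵥ b), dotProduct_mulVec_self_of_transpose_eq_neg hK, zero_add]

variable (K L S z)

noncomputable def momentumDensity (p : ℝ × ℝ) : ℝ := 1 / 2 * (px z p ⬝ᵥ K *ᵥ z p)

noncomputable def momentumFlux (p : ℝ × ℝ) : ℝ := 1 / 2 * (z p ⬝ᵥ K *ᵥ pt z p) - S (z p)

noncomputable def energyDensity (p : ℝ × ℝ) : ℝ := 1 / 2 * (z p ⬝ᵥ L *ᵥ px z p) - S (z p)

noncomputable def energyFlux (p : ℝ × ℝ) : ℝ := 1 / 2 * (pt z p ⬝ᵥ L *ᵥ z p)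

variable {K L S z}

theorem pt_momentumDensity (hz : ContDiff ℝ 2 z) (p : ℝ × ℝ) :
    pt (momentumDensity K z) p = 1 / 2 * (pt (px z) p ⬝ᵥ K *ᵥ z p + px z p ⬝ᵥ K *ᵥ pt z p) :=
  ((hasDerivAt_pt ((ContDiff.px (n := 1) hz).differentiable one_ne_zero p)).dotProduct_mulVec
    (hasDerivAt_pt (hz.differentiable two_ne_zero p)) |>.const_mul _).deriv

theorem px_momentumFlux (hS : Differentiable ℝ S) (hz : ContDiff ℝ 2 z) (p : ℝ × ℝ) :
    px (momentumFlux K S z) p =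
      1 / 2 * (px z p ⬝ᵥ K *ᵥ pt z p + z p ⬝ᵥ K *ᵥ px (pt z) p) - fderiv ℝ S (z p) (px z p) :=
  have hzx := hasDerivAt_px (hz.differentiable two_ne_zero p)
  ((hzx.dotProduct_mulVec
    (hasDerivAt_px ((ContDiff.pt (n := 1) hz).differentiable one_ne_zero p))).const_mul _ |>.sub
    ((hS (z p)).hasFDerivAt.comp_hasDerivAt p.2 hzx)).deriv

theorem pt_energyDensity (hS : Differentiable ℝ S) (hz : ContDiff ℝ 2 z) (p : ℝ × ℝ) :
    pt (energyDensity L S z) p =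
      1 / 2 * (pt z p ⬝ᵥ L *ᵥ px z p + z p ⬝ᵥ L *ᵥ pt (px z) p) - fderiv ℝ S (z p) (pt z p) :=
  have hzt := hasDerivAt_pt (hz.differentiable two_ne_zero p)
  ((hzt.dotProduct_mulVec
    (hasDerivAt_pt ((ContDiff.px (n := 1) hz).differentiable one_ne_zero p))).const_mul _ |>.sub
    ((hS (z p)).hasFDerivAt.comp_hasDerivAt p.1 hzt)).deriv

theorem px_energyFlux (hz : ContDiff ℝ 2 z) (p : ℝ × ℝ) :
    px (energyFlux L z) p = 1 / 2 * (px (pt z) p ⬝ᵥ L *ᵥ z p + pt z p ⬝ᵥ L *ᵥ px z p) :=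
  ((hasDerivAt_px ((ContDiff.pt (n := 1) hz).differentiable one_ne_zero p)).dotProduct_mulVec
    (hasDerivAt_px (hz.differentiable two_ne_zero p)) |>.const_mul _).deriv

theorem pt_momentumDensity_add_px_momentumFlux (hK : Kᵀ = -K) (hL : Lᵀ = -L)
    (hS : Differentiable ℝ S) (hz : ContDiff ℝ 2 z) {p : ℝ × ℝ}
    (hpde : K *ᵥ pt z p + L *ᵥ px z p = grad S (z p)) :
    pt (momentumDensity K z) p + px (momentumFlux K S z) p = 0 := by
  rw [pt_momentumDensity hz, px_momentumFlux hS hz, pt_px_comm hz,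
    fderiv_apply_right_of_add_eq_grad hL hpde,
    dotProduct_mulVec_eq_neg_of_transpose_eq_neg hK (z p) (px (pt z) p)]
  ring

theorem pt_energyDensity_add_px_energyFlux (hK : Kᵀ = -K) (hL : Lᵀ = -L)
    (hS : Differentiable ℝ S) (hz : ContDiff ℝ 2 z) {p : ℝ × ℝ}
    (hpde : K *ᵥ pt z p + L *ᵥ px z p = grad S (z p)) :
    pt (energyDensity L S z) p + px (energyFlux L z) p = 0 := by
  rw [pt_energyDensity hS hz, px_energyFlux hz, pt_px_comm hz,
    fderiv_apply_left_of_add_eq_grad hK hpde,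
    dotProduct_mulVec_eq_neg_of_transpose_eq_neg hL (z p) (px (pt z) p)]
  ring

end Multisymplectic

theorem total_momentum_and_energy_constant_general
    (D : ℕ)
    (K L : Matrix (Fin D) (Fin D) ℝ)
    (hK : Kᵀ = -K) (hL : Lᵀ = -L)
    (S : (Fin D → ℝ) → ℝ) (hS : ContDiff ℝ 1 S)
    (z : ℝ × ℝ → Fin D → ℝ) (hz : ContDiff ℝ 2 z)
    (hper : ∀ t x : ℝ, z (t, x + 1) = z (t, x))
    (hpde : ∀ p : ℝ × ℝ, K.mulVec (pt z p) + L.mulVec (px z p) = grad S (z p)) :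
    (∀ t₁ t₂ : ℝ,
      (∫ x in (0:ℝ)..1, (1 / 2 : ℝ) * (px z (t₁, x) ⬝ᵥ K.mulVec (z (t₁, x))))
        = ∫ x in (0:ℝ)..1, (1 / 2 : ℝ) * (px z (t₂, x) ⬝ᵥ K.mulVec (z (t₂, x)))) ∧
    (∀ t₁ t₂ : ℝ,
      (∫ x in (0:ℝ)..1,
          ((1 / 2 : ℝ) * (z (t₁, x) ⬝ᵥ L.mulVec (px z (t₁, x))) - S (z (t₁, x))))
        = ∫ x in (0:ℝ)..1,
          ((1 / 2 : ℝ) * (z (t₂, x) ⬝ᵥ L.mulVec (px z (t₂, x))) - S (z (t₂, x)))) := by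
  have hz₁ : ContDiff ℝ 1 z := hz.of_le one_le_two
  have hzt : ContDiff ℝ 1 (pt z) := ContDiff.pt (n := 1) hz
  have hzx : ContDiff ℝ 1 (px z) := ContDiff.px (n := 1) hz
  have hSd : Differentiable ℝ S := hS.differentiable one_ne_zero
  have hends : ∀ t, z (t, 0) = z (t, 1) := fun t => by simpa using (hper t 0).symm
  refine ⟨integral_eq_of_pt_add_px_eq_zero (f := momentumDensity K z)
      (g := momentumFlux K S z)
      (contDiff_const.mul (hzx.dotProduct_mulVec hz₁))
      ((contDiff_const.mul (hz₁.dotProduct_mulVec hzt)).sub (hS.comp hz₁))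
      (fun _ => pt_momentumDensity_add_px_momentumFlux hK hL hSd hz (hpde _))
      (fun t => by simp only [momentumFlux, hends, pt_eq_of_forall_eq hends]),
    integral_eq_of_pt_add_px_eq_zero (f := energyDensity L S z)
      (g := energyFlux L z)
      ((contDiff_const.mul (hz₁.dotProduct_mulVec hzx)).sub (hS.comp hz₁))
      (contDiff_const.mul (hzt.dotProduct_mulVec hz₁))
      (fun _ => pt_energyDensity_add_px_energyFlux hK hL hSd hz (hpde _))
      (fun t => by simp only [energyFlux, hends, pt_eq_of_forall_eq hends])⟩

/-- For a spatially `1`-periodic solution of the multisymplectic PDE, the total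
momentum `∫₀¹ ½ (∂_x z)·(K z) dx` and the total energy
`∫₀¹ (½ z·(L ∂_x z) − S(z)) dx` are constant in time. -/
theorem total_momentum_and_energy_constant
    (D : ℕ) (hD : 1 ≤ D)
    (K L : Matrix (Fin D) (Fin D) ℝ)
    (hK : Kᵀ = -K) (hL : Lᵀ = -L)
    (S : (Fin D → ℝ) → ℝ) (hS : ContDiff ℝ 1 S)
    (z : ℝ × ℝ → Fin D → ℝ) (hz : ContDiff ℝ 2 z)
    (hper : ∀ t x : ℝ, z (t, x + 1) = z (t, x))
    (hpde : ∀ p : ℝ × ℝ, K.mulVec (pt z p) + L.mulVec (px z p) = grad S (z p)) :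
    (∀ t₁ t₂ : ℝ,
      (∫ x in (0:ℝ)..1, (1 / 2 : ℝ) * (px z (t₁, x) ⬝ᵥ K.mulVec (z (t₁, x))))
        = ∫ x in (0:ℝ)..1, (1 / 2 : ℝ) * (px z (t₂, x) ⬝ᵥ K.mulVec (z (t₂, x)))) ∧
    (∀ t₁ t₂ : ℝ,
      (∫ x in (0:ℝ)..1,
          ((1 / 2 : ℝ) * (z (t₁, x) ⬝ᵥ L.mulVec (px z (t₁, x))) - S (z (t₁, x))))
        = ∫ x in (0:ℝ)..1,
          ((1 / 2 : ℝ) * (z (t₂, x) ⬝ᵥ L.mulVec (px z (t₂, x))) - S (z (t₂, x)))) :=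
  total_momentum_and_energy_constant_general D K L hK hL S hS z hz hper hpde
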